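/- Let λ ∈ ℝ and let y be a solution of -(p y')' + q y = λ w y on [a,b] with y(x) > 0 for every x ∈ [a,b]. Then for every absolutely continuous η : [a,b] → ℝ with η(a) = η(b) = 0, ∫_a^b p (η')² dt < ∞ and ∫_a^b |q| η² dt < ∞, one has the Allegretto–Piepenbrink lower bound ∫_a^b ( p(x) η'(x)² + q(x) η(x)² ) dx ≥ λ ∫_a^b w(x) η(x)² dx. -/

import Mathlib

open MeasureTheory Set

/-- `f` is absolutely continuous on `[a,b]` with (integrable) derivative `f'`. -/
def ACDeriv (a b : ℝ) (f f' : ℝ → ℝ) : Prop :=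
  IntegrableOn f' (Icc a b) ∧ ∀ x ∈ Icc a b, f x = f a + ∫ t in a..x, f' t

lemma acd_cont {a b : ℝ} {f f' : ℝ → ℝ} (h : ACDeriv a b f f') :
    ContinuousOn f (Icc a b) := by
  have h1 : ContinuousOn (fun x => f a + ∫ t in Ioc a x, f' t) (Icc a b) :=
    continuousOn_const.add (intervalIntegral.continuousOn_primitive h.1)
  refine h1.congr fun x hx => ?_
  rw [h.2 x hx, intervalIntegral.integral_of_le hx.1]

lemma bdd_of_acd {a b : ℝ} {f f' : ℝ → ℝ} (h : ACDeriv a b f f') :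
    ∃ C : ℝ, 0 ≤ C ∧ ∀ x ∈ Icc a b, |f x| ≤ C := by
  obtain ⟨C, hC⟩ := isCompact_Icc.exists_bound_of_continuousOn (acd_cont h)
  exact ⟨max C 0, le_max_right _ _, fun x hx =>
    le_trans (by simpa using hC x hx) (le_max_left _ _)⟩

lemma integrable_bdd_mul {s : Set ℝ} (hs : MeasurableSet s) {k u : ℝ → ℝ}
    (hk : IntegrableOn k s) (hu : AEStronglyMeasurable u (volume.restrict s))
    {C : ℝ} (hC : ∀ x ∈ s, |u x| ≤ C) :
    IntegrableOn (fun x => k x * u x) s := by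
  refine Integrable.mono' (hk.norm.const_mul C) (hk.aestronglyMeasurable.mul hu) ?_
  refine (ae_restrict_iff' hs).2 (Filter.Eventually.of_forall fun x hx => ?_)
  rw [Real.norm_eq_abs, abs_mul]
  calc |k x| * |u x| ≤ |k x| * C :=
        mul_le_mul_of_nonneg_left (hC x hx) (abs_nonneg _)
    _ = C * ‖k x‖ := by rw [Real.norm_eq_abs]; ring

lemma primitive_parts {a x : ℝ} (hax : a ≤ x) {f' g' : ℝ → ℝ}
    (hf : IntegrableOn f' (Ioc a x)) (hg : IntegrableOn g' (Ioc a x)) :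
    (∫ s in Ioc a x, f' s * ∫ t in Ioc a s, g' t) =
      ∫ t in Ioc a x, g' t * ∫ s in Ioc t x, f' s := by
  set μ := volume.restrict (Ioc a x) with hμ
  set K : ℝ × ℝ → ℝ :=
    fun z => Set.indicator {w : ℝ × ℝ | w.2 ≤ w.1} (fun w => f' w.1 * g' w.2) z with hK
  have hmeas : MeasurableSet {w : ℝ × ℝ | w.2 ≤ w.1} :=
    measurableSet_le measurable_snd measurable_fst
  have hKint : Integrable K (μ.prod μ) := (hf.mul_prod hg).indicator hmeas
  have swap : (∫ s, ∫ t, K (s, t) ∂μ ∂μ) = ∫ t, ∫ s, K (s, t) ∂μ ∂μ :=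
    MeasureTheory.integral_integral_swap hKint
  have hL : ∀ s ∈ Ioc a x, (∫ t, K (s, t) ∂μ) = f' s * ∫ t in Ioc a s, g' t := by
    intro s hs
    have h1 : (fun t => K (s, t)) = Set.indicator (Iic s) (fun t => f' s * g' t) := by
      funext t
      by_cases h : t ≤ s
      · simp [hK, Set.indicator_of_mem, h, Set.mem_setOf_eq, Set.mem_Iic]
      · simp [hK, Set.indicator_of_notMem, h, Set.mem_setOf_eq, Set.mem_Iic]
    rw [h1, MeasureTheory.integral_indicator measurableSet_Iic, hμ,
      Measure.restrict_restrict measurableSet_Iic]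
    have h2 : Iic s ∩ Ioc a x = Ioc a s := by
      ext t
      constructor
      · rintro ⟨h1', h2', _⟩; exact ⟨h2', h1'⟩
      · rintro ⟨h1', h2'⟩; exact ⟨h2', h1', h2'.trans hs.2⟩
    rw [h2, MeasureTheory.integral_const_mul]
  have hR : ∀ t ∈ Ioc a x, (∫ s, K (s, t) ∂μ) = g' t * ∫ s in Ioc t x, f' s := by
    intro t ht
    have h1 : (fun s => K (s, t)) = Set.indicator (Ici t) (fun s => f' s * g' t) := by
      funext s
      by_cases h : t ≤ s
      · simp [hK, Set.indicator_of_mem, h, Set.mem_setOf_eq, Set.mem_Ici]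
      · simp [hK, Set.indicator_of_notMem, h, Set.mem_setOf_eq, Set.mem_Ici]
    rw [h1, MeasureTheory.integral_indicator measurableSet_Ici, hμ,
      Measure.restrict_restrict measurableSet_Ici]
    have h2 : Ici t ∩ Ioc a x = Icc t x := by
      ext s
      constructor
      · rintro ⟨h1', _, h3'⟩; exact ⟨h1', h3'⟩
      · rintro ⟨h1', h2'⟩; exact ⟨h1', ht.1.trans_le h1', h2'⟩
    rw [h2, MeasureTheory.integral_Icc_eq_integral_Ioc, MeasureTheory.integral_mul_const _ f',
      mul_comm]
  calc (∫ s in Ioc a x, f' s * ∫ t in Ioc a s, g' t)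
      = ∫ s, ∫ t, K (s, t) ∂μ ∂μ :=
        (setIntegral_congr_fun measurableSet_Ioc fun s hs => (hL s hs)).symm
    _ = ∫ t, ∫ s, K (s, t) ∂μ ∂μ := swap
    _ = ∫ t in Ioc a x, g' t * ∫ s in Ioc t x, f' s :=
        setIntegral_congr_fun measurableSet_Ioc fun t ht => hR t ht

lemma setint_abs_bound {a b : ℝ} {g' : ℝ → ℝ} (hg : IntegrableOn g' (Icc a b))
    {t : ℝ} (ht : t ∈ Icc a b) :
    |∫ s in Ioc a t, g' s| ≤ ∫ s in Icc a b, |g' s| := by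
  calc |∫ s in Ioc a t, g' s| ≤ ∫ s in Ioc a t, |g' s| := by
        simpa [Real.norm_eq_abs] using
          norm_integral_le_integral_norm (μ := volume.restrict (Ioc a t)) g'
    _ ≤ ∫ s in Icc a b, |g' s| := by
        apply setIntegral_mono_set hg.norm
        · exact Filter.Eventually.of_forall fun s => abs_nonneg _
        · exact HasSubset.Subset.eventuallyLE fun s hs =>
            ⟨hs.1.le, hs.2.trans ht.2⟩

lemma acd_mul {a b : ℝ} {f f' g g' : ℝ → ℝ}
    (hf : ACDeriv a b f f') (hg : ACDeriv a b g g') :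
    ACDeriv a b (fun x => f x * g x) (fun x => f' x * g x + f x * g' x) := by
  obtain ⟨Cf, hCf0, hCf⟩ := bdd_of_acd hf
  obtain ⟨Cg, hCg0, hCg⟩ := bdd_of_acd hg
  have hfc := acd_cont hf
  have hgc := acd_cont hg
  have hfm : AEStronglyMeasurable f (volume.restrict (Icc a b)) :=
    hfc.aestronglyMeasurable measurableSet_Icc
  have hgm : AEStronglyMeasurable g (volume.restrict (Icc a b)) :=
    hgc.aestronglyMeasurable measurableSet_Icc
  have int1 : IntegrableOn (fun x => f' x * g x) (Icc a b) :=
    integrable_bdd_mul measurableSet_Icc hf.1 hgm hCg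
  have int2 : IntegrableOn (fun x => f x * g' x) (Icc a b) := by
    have := integrable_bdd_mul measurableSet_Icc hg.1 hfm hCf
    exact this.congr (Filter.Eventually.of_forall fun x => mul_comm _ _)
  refine ⟨int1.add int2, fun x hx => ?_⟩
  show f x * g x = f a * g a + ∫ t in a..x, (f' t * g t + f t * g' t)
  have hax : a ≤ x := hx.1
  have hsub : Ioc a x ⊆ Icc a b := fun t ht => ⟨ht.1.le, ht.2.trans hx.2⟩
  set F : ℝ → ℝ := fun t => ∫ s in Ioc a t, f' s with hF
  set G : ℝ → ℝ := fun t => ∫ s in Ioc a t, g' s with hG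
  have hfev : ∀ t ∈ Icc a b, f t = f a + F t := fun t ht => by
    rw [hf.2 t ht, intervalIntegral.integral_of_le ht.1]
  have hgev : ∀ t ∈ Icc a b, g t = g a + G t := fun t ht => by
    rw [hg.2 t ht, intervalIntegral.integral_of_le ht.1]
  -- integrability on Ioc a x
  have hf'I : IntegrableOn f' (Ioc a x) := hf.1.mono_set hsub
  have hg'I : IntegrableOn g' (Ioc a x) := hg.1.mono_set hsub
  have hFc : ContinuousOn F (Icc a b) := intervalIntegral.continuousOn_primitive hf.1
  have hGc : ContinuousOn G (Icc a b) := intervalIntegral.continuousOn_primitive hg.1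
  have hFm : AEStronglyMeasurable F (volume.restrict (Icc a b)) :=
    hFc.aestronglyMeasurable measurableSet_Icc
  have hGm : AEStronglyMeasurable G (volume.restrict (Icc a b)) :=
    hGc.aestronglyMeasurable measurableSet_Icc
  have hFbd : ∀ t ∈ Icc a b, |F t| ≤ ∫ s in Icc a b, |f' s| := fun t ht =>
    setint_abs_bound hf.1 ht
  have hGbd : ∀ t ∈ Icc a b, |G t| ≤ ∫ s in Icc a b, |g' s| := fun t ht =>
    setint_abs_bound hg.1 ht
  have intf'G : IntegrableOn (fun t => f' t * G t) (Ioc a x) :=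
    (integrable_bdd_mul measurableSet_Icc hf.1 hGm hGbd).mono_set hsub
  have intFg' : IntegrableOn (fun t => g' t * F t) (Ioc a x) :=
    (integrable_bdd_mul measurableSet_Icc hg.1 hFm hFbd).mono_set hsub
  -- Fubini
  have fub := primitive_parts hax hf'I hg'I
  -- ∫_{Ioc t x} f' = F x - F t for t ∈ Ioc a x
  have hsplit : ∀ t ∈ Ioc a x, (∫ s in Ioc t x, f' s) = F x - F t := by
    intro t ht
    have hd : Disjoint (Ioc a t) (Ioc t x) := (Ioc_disjoint_Ioc_of_le le_rfl)
    have hu : Ioc a t ∪ Ioc t x = Ioc a x := Ioc_union_Ioc_eq_Ioc ht.1.le ht.2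
    have := setIntegral_union hd measurableSet_Ioc
      (hf.1.mono_set fun s hs => hsub ⟨hs.1, hs.2.trans ht.2⟩)
      (hf.1.mono_set fun s hs => hsub ⟨ht.1.trans hs.1, hs.2⟩) (f := f')
    rw [hu] at this
    rw [hF]; simp only; rw [this]; ring
  have fub' : (∫ t in Ioc a x, f' t * G t) = ∫ t in Ioc a x, g' t * (F x - F t) := by
    have h0 : (∫ t in Ioc a x, f' t * G t)
        = ∫ t in Ioc a x, g' t * ∫ s in Ioc t x, f' s := fub
    rw [h0]
    exact setIntegral_congr_fun measurableSet_Ioc fun t ht => by rw [hsplit t ht]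
  have fub2 : (∫ t in Ioc a x, f' t * G t) = F x * G x - ∫ t in Ioc a x, g' t * F t := by
    rw [fub']
    have e1 : ∀ t, g' t * (F x - F t) = F x * g' t - g' t * F t := fun t => by ring
    simp_rw [e1]
    rw [integral_sub (hg'I.const_mul (F x)) intFg', MeasureTheory.integral_const_mul]
  -- main computation
  rw [intervalIntegral.integral_of_le hax]
  have congr1 : EqOn (fun t => f' t * g t + f t * g' t)
      (fun t => (g a * f' t + f a * g' t) + (f' t * G t + g' t * F t)) (Ioc a x) := by
    intro t ht
    have h1 := hfev t (hsub ht)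
    have h2 := hgev t (hsub ht)
    simp only
    rw [h1, h2]; ring
  rw [setIntegral_congr_fun measurableSet_Ioc congr1]
  have intc : IntegrableOn (fun t => g a * f' t + f a * g' t) (Ioc a x) :=
    (hf'I.const_mul (g a)).add (hg'I.const_mul (f a))
  have eA : (∫ t in Ioc a x, ((g a * f' t + f a * g' t) + (f' t * G t + g' t * F t))) =
      (∫ t in Ioc a x, (g a * f' t + f a * g' t)) +
        ∫ t in Ioc a x, (f' t * G t + g' t * F t) :=
    integral_add intc (intf'G.add intFg')
  have eB : (∫ t in Ioc a x, (g a * f' t + f a * g' t)) =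
      (∫ t in Ioc a x, g a * f' t) + ∫ t in Ioc a x, f a * g' t :=
    integral_add (hf'I.const_mul (g a)) (hg'I.const_mul (f a))
  have eC : (∫ t in Ioc a x, (f' t * G t + g' t * F t)) =
      (∫ t in Ioc a x, f' t * G t) + ∫ t in Ioc a x, g' t * F t :=
    integral_add intf'G intFg'
  rw [eA, eB, eC, fub2, MeasureTheory.integral_const_mul, MeasureTheory.integral_const_mul]
  have hfx := hfev x hx
  have hgx := hgev x hx
  have hfa : F a = 0 := by rw [hF]; simp
  have hga : G a = 0 := by rw [hG]; simp
  rw [hfx, hgx]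
  have : (∫ t in Ioc a x, f' t) = F x := rfl
  rw [this]
  have : (∫ t in Ioc a x, g' t) = G x := rfl
  rw [this]
  ring

lemma vanish_of_integral_eq {a b : ℝ} (hab : a ≤ b) {k u : ℝ → ℝ}
    (hk : IntegrableOn k (Icc a b))
    (hu : ContinuousOn u (Icc a b))
    (hku : IntegrableOn (fun t => k t * u t) (Icc a b))
    (heq : ∀ x ∈ Icc a b, u x = ∫ t in Ioc a x, k t * u t) :
    ∀ x ∈ Icc a b, u x = 0 := by
  set S : Set ℝ := {x | x ∈ Icc a b ∧ ∀ t ∈ Icc a x, u t = 0} with hS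
  have hA : a ∈ S := by
    refine ⟨⟨le_rfl, hab⟩, fun t ht => ?_⟩
    have hta : t = a := le_antisymm ht.2 ht.1
    subst hta
    rw [heq t ⟨le_rfl, hab⟩]
    simp
  have hbdd : BddAbove S := ⟨b, fun x hx => hx.1.2⟩
  set c := sSup S with hc
  have hac : a ≤ c := le_csSup hbdd hA
  have hcb : c ≤ b := csSup_le ⟨a, hA⟩ fun x hx => hx.1.2
  -- u vanishes on [a, c)
  have hIco : ∀ t ∈ Ico a c, u t = 0 := by
    intro t ht
    obtain ⟨s, hsS, hts⟩ := exists_lt_of_lt_csSup ⟨a, hA⟩ ht.2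
    exact hsS.2 t ⟨ht.1, hts.le⟩
  -- a.e. vanishing of k*u on Ioc a x for x ≤ c
  have haeIoc : ∀ x, x ≤ c → (∀ᵐ t ∂volume.restrict (Ioc a x), k t * u t = 0) := by
    intro x hxc
    have h1 : ∀ᵐ (t : ℝ) ∂volume.restrict (Ioc a x), t ≠ x := by
      refine ae_restrict_of_ae ?_
      rw [MeasureTheory.ae_iff]
      have he : {t : ℝ | ¬ t ≠ x} = {x} := by ext t; simp
      rw [he]
      exact Real.volume_singleton
    have h2 : ∀ᵐ (t : ℝ) ∂volume.restrict (Ioc a x), t ∈ Ioc a x :=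
      ae_restrict_mem measurableSet_Ioc
    filter_upwards [h1, h2] with t h1t h2t
    have hu0 : u t = 0 :=
      hIco t ⟨h2t.1.le, lt_of_lt_of_le (lt_of_le_of_ne h2t.2 h1t) hxc⟩
    rw [hu0, mul_zero]
  -- hence u vanishes on all of [a, c]
  have hIcc : ∀ t ∈ Icc a c, u t = 0 := by
    intro t ht
    rcases lt_or_eq_of_le ht.2 with h | h
    · exact hIco t ⟨ht.1, h⟩
    · rw [h, heq c ⟨hac, hcb⟩]
      exact integral_eq_zero_of_ae (haeIoc c le_rfl)
  -- show c = b
  have hceqb : c = b := by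
    by_contra hne
    have hclt : c < b := lt_of_le_of_ne hcb hne
    -- find d ∈ (c, b] with ∫_{Ioc c d} |k| ≤ 1/2
    have hkcb : IntegrableOn k (Icc c b) :=
      hk.mono_set fun t ht => ⟨hac.trans ht.1, ht.2⟩
    have hΦ : ContinuousOn (fun d => ∫ t in Ioc c d, |k t|) (Icc c b) :=
      intervalIntegral.continuousOn_primitive hkcb.norm
    have hΦc : ContinuousWithinAt (fun d => ∫ t in Ioc c d, |k t|) (Icc c b) c :=
      hΦ c ⟨le_rfl, hcb⟩
    obtain ⟨δ, hδ0, hδ⟩ := Metric.continuousWithinAt_iff.1 hΦc (1/2) (by norm_num)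
    set d := min b (c + δ/2) with hd
    have hcd : c < d := lt_min hclt (by linarith)
    have hdb : d ≤ b := min_le_left _ _
    have hdistlt : dist d c < δ := by
      rw [Real.dist_eq, abs_of_nonneg (by linarith : (0:ℝ) ≤ d - c)]
      have : d ≤ c + δ/2 := min_le_right _ _
      linarith
    have hsmall : (∫ t in Ioc c d, |k t|) < 1/2 := by
      have habs := hδ ⟨hcd.le, hdb⟩ hdistlt
      rw [Real.dist_eq] at habs
      have h0 : (∫ t in Ioc c c, |k t|) = 0 := by simp
      rw [h0, sub_zero] at habs
      exact lt_of_le_of_lt (le_abs_self _) habs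
    -- max of |u| on [c, d]
    have hsubcd : Icc c d ⊆ Icc a b := fun t ht => ⟨hac.trans ht.1, ht.2.trans hdb⟩
    have huc : ContinuousOn (fun t => |u t|) (Icc c d) := (hu.mono hsubcd).abs
    obtain ⟨m, hmI, hmax⟩ := isCompact_Icc.exists_isMaxOn ⟨c, le_rfl, hcd.le⟩ huc
    -- u on [c,d]: u t = ∫_{Ioc c t} k u
    have hurep : ∀ t ∈ Icc c d, u t = ∫ s in Ioc c t, k s * u s := by
      intro t ht
      have htI : t ∈ Icc a b := hsubcd ht
      have hsplit : Ioc a c ∪ Ioc c t = Ioc a t := Ioc_union_Ioc_eq_Ioc hac ht.1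
      have hint1 : IntegrableOn (fun s => k s * u s) (Ioc a c) :=
        hku.mono_set fun s hs => ⟨hs.1.le, hs.2.trans hcb⟩
      have hint2 : IntegrableOn (fun s => k s * u s) (Ioc c t) :=
        hku.mono_set fun s hs => ⟨hac.trans hs.1.le, hs.2.trans htI.2⟩
      have := setIntegral_union (Ioc_disjoint_Ioc_of_le le_rfl) measurableSet_Ioc hint1 hint2
        (f := fun s => k s * u s)
      rw [hsplit] at this
      rw [heq t htI, this, integral_eq_zero_of_ae (haeIoc c le_rfl), zero_add]
    -- bound |u m|
    have hum : |u m| ≤ |u m| * (1/2) := by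
      have h1 : u m = ∫ s in Ioc c m, k s * u s := hurep m hmI
      have hint2 : IntegrableOn (fun s => k s * u s) (Ioc c m) :=
        hku.mono_set fun s hs => ⟨hac.trans hs.1.le, hs.2.trans ((hsubcd hmI).2)⟩
      have hintk : IntegrableOn (fun s => |k s| * |u m|) (Ioc c m) := by
        have : IntegrableOn k (Ioc c m) :=
          hk.mono_set fun s hs => ⟨hac.trans hs.1.le, hs.2.trans (hsubcd hmI).2⟩
        exact this.norm.mul_const _
      calc |u m| = |∫ s in Ioc c m, k s * u s| := by rw [h1]
        _ ≤ ∫ s in Ioc c m, |k s * u s| := by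
            simpa [Real.norm_eq_abs, abs_mul] using
              norm_integral_le_integral_norm (μ := volume.restrict (Ioc c m))
                (fun s => k s * u s)
        _ = ∫ s in Ioc c m, |k s| * |u s| := by simp_rw [abs_mul]
        _ ≤ ∫ s in Ioc c m, |k s| * |u m| := by
            have hint2' : IntegrableOn (fun s => |k s| * |u s|) (Ioc c m) :=
              hint2.abs.congr (Filter.Eventually.of_forall fun s => (abs_mul _ _))
            refine setIntegral_mono_on hint2' hintk measurableSet_Ioc fun s hs => ?_
            exact mul_le_mul_of_nonneg_left
              (hmax ⟨hs.1.le, hs.2.trans hmI.2⟩) (abs_nonneg _)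
        _ = (∫ s in Ioc c m, |k s|) * |u m| := by rw [integral_mul_const]
        _ ≤ (1/2) * |u m| := by
            refine mul_le_mul_of_nonneg_right ?_ (abs_nonneg _)
            refine le_trans ?_ hsmall.le
            refine setIntegral_mono_set ?_ ?_ ?_
            · exact (hk.mono_set fun s hs =>
                ⟨hac.trans hs.1.le, hs.2.trans hdb⟩).norm
            · exact Filter.Eventually.of_forall fun s => abs_nonneg _
            · exact HasSubset.Subset.eventuallyLE fun s hs => ⟨hs.1, hs.2.trans hmI.2⟩
        _ = |u m| * (1/2) := by ring
    have hum0 : |u m| ≤ 0 := by linarith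
    have humax0 : ∀ t ∈ Icc c d, u t = 0 := fun t ht =>
      abs_nonpos_iff.mp (le_trans (hmax ht) hum0)
    -- contradiction: d ∈ S but d > c = sSup S
    have hdS : d ∈ S := by
      refine ⟨⟨hac.trans hcd.le, hdb⟩, fun t ht => ?_⟩
      rcases le_or_gt t c with h | h
      · exact hIcc t ⟨ht.1, h⟩
      · exact humax0 t ⟨h.le, ht.2⟩
    exact absurd (le_csSup hbdd hdS) (not_le.mpr hcd)
  intro x hx
  exact hIcc x ⟨hx.1, hceqb ▸ hx.2⟩

set_option maxHeartbeats 1000000 in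
lemma acd_inv {a b : ℝ} (hab : a ≤ b) {y y' : ℝ → ℝ} (hy : ACDeriv a b y y')
    (hpos : ∀ x ∈ Icc a b, 0 < y x) :
    ACDeriv a b (fun x => 1 / y x) (fun x => -(y' x) / (y x) ^ 2) := by
  have hyc := acd_cont hy
  -- positive lower bound for y
  obtain ⟨z, hzI, hzmin⟩ := isCompact_Icc.exists_isMinOn ⟨a, le_rfl, hab⟩ hyc
  set cm := y z with hcm
  have hcm0 : 0 < cm := hpos z hzI
  have hcmle : ∀ x ∈ Icc a b, cm ≤ y x := fun x hx => hzmin hx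
  -- integrability of the candidate derivative
  have hym : AEStronglyMeasurable y (volume.restrict (Icc a b)) :=
    hyc.aestronglyMeasurable measurableSet_Icc
  have hdm : AEStronglyMeasurable (fun x => -(y' x) / (y x) ^ 2)
      (volume.restrict (Icc a b)) :=
    (hy.1.aestronglyMeasurable.neg.aemeasurable.div
      ((hym.aemeasurable.mul hym.aemeasurable).congr
        (Filter.Eventually.of_forall fun x => (pow_two (y x)).symm))).aestronglyMeasurable
  have hdint : IntegrableOn (fun x => -(y' x) / (y x) ^ 2) (Icc a b) := by
    refine Integrable.mono' (hy.1.norm.const_mul (1 / cm ^ 2)) hdm ?_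
    refine (ae_restrict_iff' measurableSet_Icc).2
      (Filter.Eventually.of_forall fun x hx => ?_)
    have hyx := hpos x hx
    have hylb := hcmle x hx
    have h1 : cm ^ 2 ≤ y x ^ 2 := by nlinarith
    have h2 : (0:ℝ) < cm ^ 2 := pow_pos hcm0 2
    have h3 : (0:ℝ) < y x ^ 2 := pow_pos hyx 2
    rw [Real.norm_eq_abs, Real.norm_eq_abs, abs_div, abs_neg, abs_of_pos h3,
      div_le_iff₀ h3]
    have key : |y' x| * cm ^ 2 ≤ |y' x| * y x ^ 2 :=
      mul_le_mul_of_nonneg_left h1 (abs_nonneg _)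
    have h4 : |y' x| ≤ |y' x| * y x ^ 2 / cm ^ 2 := by
      rw [le_div_iff₀ h2]; linarith
    have h5 : 1 / cm ^ 2 * |y' x| * y x ^ 2 = |y' x| * y x ^ 2 / cm ^ 2 := by ring
    linarith
  -- candidate function h
  set d : ℝ → ℝ := fun x => -(y' x) / (y x) ^ 2 with hd
  set h : ℝ → ℝ := fun t => 1 / y a + ∫ s in a..t, d s with hh
  have hha : h a = 1 / y a := by rw [hh]; simp
  have hhAC : ACDeriv a b h d := by
    refine ⟨hdint, fun x hx => ?_⟩
    rw [hh]; simp
  have hhc := acd_cont hhAC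
  -- product y * h
  have hyh := acd_mul hy hhAC
  -- u = y * h - 1 satisfies the integral equation with kernel k = y'/y
  set k : ℝ → ℝ := fun t => y' t / y t with hk
  set u : ℝ → ℝ := fun t => y t * h t - 1 with hu
  have hkint : IntegrableOn k (Icc a b) := by
    refine Integrable.mono' (hy.1.norm.const_mul (1 / cm)) (hy.1.aestronglyMeasurable.aemeasurable.div hym.aemeasurable).aestronglyMeasurable ?_
    refine (ae_restrict_iff' measurableSet_Icc).2
      (Filter.Eventually.of_forall fun x hx => ?_)
    have hyx := hpos x hx
    have hylb := hcmle x hx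
    rw [Real.norm_eq_abs, Real.norm_eq_abs, abs_div, abs_of_pos hyx, div_le_iff₀ hyx]
    have key : |y' x| * cm ≤ |y' x| * y x :=
      mul_le_mul_of_nonneg_left hylb (abs_nonneg _)
    have h4 : |y' x| ≤ |y' x| * y x / cm := by
      rw [le_div_iff₀ hcm0]; linarith
    have h5 : 1 / cm * |y' x| * y x = |y' x| * y x / cm := by ring
    linarith
  have hueq : ∀ x ∈ Icc a b, u x = ∫ t in Ioc a x, k t * u t := by
    intro x hx
    have h1 := hyh.2 x hx
    have hya : y a * h a = 1 := by
      rw [hha, mul_one_div, div_self (ne_of_gt (hpos a ⟨le_rfl, hab⟩))]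
    have h1' : y x * h x = y a * h a + ∫ t in a..x, (y' t * h t + y t * d t) := h1
    have h2 : u x = ∫ t in a..x, (y' t * h t + y t * d t) := by
      rw [hu]; simp only
      rw [h1', hya]; ring
    rw [h2, intervalIntegral.integral_of_le hx.1]
    refine setIntegral_congr_fun measurableSet_Ioc fun t ht => ?_
    have htI : t ∈ Icc a b := ⟨ht.1.le, ht.2.trans hx.2⟩
    have hyt := hpos t htI
    have hyne : y t ≠ 0 := ne_of_gt hyt
    rw [hk, hu, hd]; simp only
    field_simp
    ring
  have hucont : ContinuousOn u (Icc a b) :=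
    ((hyc.mul hhc).sub continuousOn_const)
  have hkuint : IntegrableOn (fun t => k t * u t) (Icc a b) := by
    obtain ⟨Cu, hCu0, hCu⟩ : ∃ C : ℝ, 0 ≤ C ∧ ∀ x ∈ Icc a b, |u x| ≤ C := by
      obtain ⟨C, hC⟩ := isCompact_Icc.exists_bound_of_continuousOn hucont
      exact ⟨max C 0, le_max_right _ _, fun x hx =>
        le_trans (by simpa using hC x hx) (le_max_left _ _)⟩
    exact integrable_bdd_mul measurableSet_Icc hkint
      (hucont.aestronglyMeasurable measurableSet_Icc) hCu
  have huzero := vanish_of_integral_eq hab hkint hucont hkuint hueq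
  -- conclude h = 1/y on Icc
  refine ⟨hdint, fun x hx => ?_⟩
  have hx0 := huzero x hx
  have hyx := hpos x hx
  have hhx : h x = 1 / y x := by
    have : y x * h x = 1 := by
      have := hx0
      rw [hu] at this; simp only at this
      linarith
    field_simp at this ⊢
    linarith [this]
  have hxa : h a = 1 / y a := hha
  have := hhAC.2 x hx
  rw [hhx, hxa] at this
  exact this


/-- `y` (with derivative `y'`) is a solution of `-(p y')' + q y = λ w y` on `[a,b]`. -/
def SLSolution (a b lam : ℝ) (p q w y y' : ℝ → ℝ) : Prop :=
  ACDeriv a b y y' ∧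
  ACDeriv a b (fun x => p x * y' x) (fun x => (q x - lam * w x) * y x)

set_option maxHeartbeats 1000000 in
/-- Allegretto–Piepenbrink lower bound on a single edge `[a,b]`. -/
theorem allegretto_piepenbrink_lower_bound (a b : ℝ) (hab : a < b)
    (p q w : ℝ → ℝ) (hpm : Measurable p) (hqm : Measurable q) (hwm : Measurable w)
    (hppos : ∀ᵐ x ∂volume, x ∈ Icc a b → 0 < p x)
    (hwpos : ∀ᵐ x ∂volume, x ∈ Icc a b → 0 ≤ w x)
    (hpint : IntegrableOn (fun x => 1 / p x) (Icc a b))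
    (hqint : IntegrableOn q (Icc a b))
    (hwint : IntegrableOn w (Icc a b))
    (lam : ℝ) (y y' : ℝ → ℝ)
    (hy : SLSolution a b lam p q w y y')
    (hypos : ∀ x ∈ Icc a b, 0 < y x) :
    ∀ η η' : ℝ → ℝ, ACDeriv a b η η' → η a = 0 → η b = 0 →
      IntegrableOn (fun t => p t * η' t ^ 2) (Icc a b) →
      IntegrableOn (fun t => |q t| * η t ^ 2) (Icc a b) →
      (∫ x in a..b, (p x * η' x ^ 2 + q x * η x ^ 2)) ≥
        lam * ∫ x in a..b, w x * η x ^ 2 := by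
  intro η η' hη hηa hηb hint1 hint2
  obtain ⟨hyAC, hP⟩ := hy
  have hsub : Ioc a b ⊆ Icc a b := Ioc_subset_Icc_self
  have hyc := acd_cont hyAC
  have hηc := acd_cont hη
  have hPc := acd_cont hP
  obtain ⟨Cη, hCη0, hCη⟩ := bdd_of_acd hη
  obtain ⟨CP, hCP0, hCP⟩ := bdd_of_acd hP
  -- positive lower bound for y
  obtain ⟨z, hzI, hzmin⟩ := isCompact_Icc.exists_isMinOn ⟨a, le_rfl, hab.le⟩ hyc
  set cm := y z with hcm
  have hcm0 : 0 < cm := hypos z hzI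
  have hcmle : ∀ x ∈ Icc a b, cm ≤ y x := fun x hx => hzmin hx
  -- measurability helpers
  have hym : AEStronglyMeasurable y (volume.restrict (Icc a b)) :=
    hyc.aestronglyMeasurable measurableSet_Icc
  have hηm : AEStronglyMeasurable η (volume.restrict (Icc a b)) :=
    hηc.aestronglyMeasurable measurableSet_Icc
  have hy'm : AEStronglyMeasurable y' (volume.restrict (Icc a b)) :=
    hyAC.1.aestronglyMeasurable
  have hη'm : AEStronglyMeasurable η' (volume.restrict (Icc a b)) :=
    hη.1.aestronglyMeasurable
  -- the AC chain
  have hinv := acd_inv hab.le hyAC hypos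
  have hη2 := acd_mul hη hη
  have hPη2 := acd_mul hP hη2
  have hG := acd_mul hPη2 hinv
  have hGb : p b * y' b * (η b * η b) * (1 / y b) =
      p a * y' a * (η a * η a) * (1 / y a) +
      ∫ t in a..b,
        (((q t - lam * w t) * y t * (η t * η t) +
            p t * y' t * (η' t * η t + η t * η' t)) * (1 / y t) +
          p t * y' t * (η t * η t) * (-(y' t) / (y t) ^ 2)) :=
    hG.2 b ⟨hab.le, le_rfl⟩
  rw [hηa, hηb] at hGb
  have hzero0 : (∫ t in a..b,
      (((q t - lam * w t) * y t * (η t * η t) +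
          p t * y' t * (η' t * η t + η t * η' t)) * (1 / y t) +
        p t * y' t * (η t * η t) * (-(y' t) / (y t) ^ 2))) = 0 := by
    simpa using hGb.symm
  rw [intervalIntegral.integral_of_le hab.le] at hzero0
  -- abbreviations
  set A : ℝ → ℝ := fun t => (q t - lam * w t) * η t ^ 2 with hA
  set T1 : ℝ → ℝ := fun t => η' t * (2 * (p t * y' t) * η t / y t) with hT1
  set T2 : ℝ → ℝ := fun t => p t * y' t * y' t * η t ^ 2 / y t ^ 2 with hT2
  set R : ℝ → ℝ := fun t => p t * (η' t - y' t / y t * η t) ^ 2 with hR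
  have hzero : (∫ t in Ioc a b, (A t + (T1 t - T2 t))) = 0 := by
    rw [← hzero0]
    refine setIntegral_congr_fun measurableSet_Ioc fun t ht => ?_
    have hyt : 0 < y t := hypos t (hsub ht)
    have hyne : y t ≠ 0 := ne_of_gt hyt
    rw [hA, hT1, hT2]; simp only
    field_simp
    ring
  -- integrability of the pieces on Icc a b
  have hη2m : AEStronglyMeasurable (fun t => η t ^ 2) (volume.restrict (Icc a b)) :=
    ((hηc.mul hηc).congr fun t _ => (pow_two (η t))).aestronglyMeasurable measurableSet_Icc
  have hη2bd : ∀ x ∈ Icc a b, |η x ^ 2| ≤ Cη ^ 2 := by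
    intro x hx
    rw [abs_pow]
    exact pow_le_pow_left₀ (abs_nonneg _) (hCη x hx) 2
  -- q * η² integrable
  have hq2 : IntegrableOn (fun t => q t * η t ^ 2) (Icc a b) := by
    refine Integrable.mono' hint2 (hqm.aestronglyMeasurable.mul hη2m) ?_
    refine Filter.Eventually.of_forall fun t => ?_
    rw [Real.norm_eq_abs, abs_mul, abs_pow, sq_abs]
  -- w * η² integrable
  have hw2 : IntegrableOn (fun t => w t * η t ^ 2) (Icc a b) :=
    integrable_bdd_mul measurableSet_Icc hwint hη2m hη2bd
  -- A integrable
  have hAint : IntegrableOn A (Icc a b) := by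
    have : IntegrableOn (fun t => q t * η t ^ 2 - lam * (w t * η t ^ 2)) (Icc a b) :=
      hq2.sub ((hw2.const_mul lam))
    refine this.congr (Filter.Eventually.of_forall fun t => ?_)
    rw [hA]; ring
  -- T1 integrable
  have hVc : ContinuousOn (fun t => 2 * (p t * y' t) * η t / y t) (Icc a b) := by
    refine ContinuousOn.div ?_ hyc fun x hx => ne_of_gt (hypos x hx)
    exact (continuousOn_const.mul hPc).mul hηc
  have hVbd : ∀ x ∈ Icc a b, |2 * (p x * y' x) * η x / y x| ≤ 2 * CP * Cη / cm := by
    intro x hx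
    have hyx := hypos x hx
    rw [abs_div, abs_of_pos hyx]
    refine div_le_div₀ (by positivity) ?_ hcm0 (hcmle x hx)
    rw [abs_mul, abs_mul, abs_two]
    calc 2 * |p x * y' x| * |η x| ≤ 2 * CP * |η x| := by
          have := hCP x hx
          nlinarith [abs_nonneg (η x)]
      _ ≤ 2 * CP * Cη := by
          have := hCη x hx
          nlinarith
  have hT1int : IntegrableOn T1 (Icc a b) :=
    integrable_bdd_mul measurableSet_Icc hη.1
      (hVc.aestronglyMeasurable measurableSet_Icc) hVbd
  -- T2 integrable
  have hT2m : AEStronglyMeasurable T2 (volume.restrict (Icc a b)) := by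
    rw [hT2]
    exact ((((hpm.aemeasurable.mul hy'm.aemeasurable).mul hy'm.aemeasurable).mul
      (hηm.aemeasurable.pow_const 2)).div (hym.aemeasurable.pow_const 2)).aestronglyMeasurable
  have hT2int : IntegrableOn T2 (Icc a b) := by
    refine Integrable.mono' (hpint.const_mul (CP ^ 2 * Cη ^ 2 / cm ^ 2)) hT2m ?_
    have h1 : ∀ᵐ t ∂volume.restrict (Icc a b), t ∈ Icc a b → 0 < p t :=
      ae_restrict_of_ae hppos
    have h2 : ∀ᵐ t ∂volume.restrict (Icc a b), t ∈ Icc a b :=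
      ae_restrict_mem measurableSet_Icc
    filter_upwards [h1, h2] with t hpt ht
    have hptpos : 0 < p t := hpt ht
    have hyt := hypos t ht
    have e : T2 t = (p t * y' t) ^ 2 * (η t ^ 2 / y t ^ 2) * (1 / p t) := by
      rw [hT2]; field_simp
    rw [Real.norm_eq_abs, e]
    have hb1 : (p t * y' t) ^ 2 ≤ CP ^ 2 := by
      rw [← sq_abs]
      exact pow_le_pow_left₀ (abs_nonneg _) (hCP t ht) 2
    have hb2 : η t ^ 2 / y t ^ 2 ≤ Cη ^ 2 / cm ^ 2 := by
      refine div_le_div₀ (by positivity) ?_ (by positivity) ?_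
      · rw [← sq_abs]
        exact pow_le_pow_left₀ (abs_nonneg _) (hCη t ht) 2
      · have := hcmle t ht
        nlinarith
    have hnn : (0:ℝ) ≤ (p t * y' t) ^ 2 * (η t ^ 2 / y t ^ 2) * (1 / p t) := by positivity
    rw [abs_of_nonneg hnn]
    have h1p : (0:ℝ) < 1 / p t := by positivity
    calc (p t * y' t) ^ 2 * (η t ^ 2 / y t ^ 2) * (1 / p t)
        ≤ CP ^ 2 * (η t ^ 2 / y t ^ 2) * (1 / p t) := by
          have h0 : (0:ℝ) ≤ η t ^ 2 / y t ^ 2 := by positivity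
          exact mul_le_mul_of_nonneg_right
            (mul_le_mul_of_nonneg_right hb1 h0) h1p.le
      _ ≤ CP ^ 2 * (Cη ^ 2 / cm ^ 2) * (1 / p t) := by
          have h0 : (0:ℝ) ≤ CP ^ 2 := by positivity
          exact mul_le_mul_of_nonneg_right
            (mul_le_mul_of_nonneg_left hb2 h0) h1p.le
      _ = CP ^ 2 * Cη ^ 2 / cm ^ 2 * (1 / p t) := by ring
  -- restrict everything to I = Ioc a b
  have hq2I : IntegrableOn (fun t => q t * η t ^ 2) (Ioc a b) := hq2.mono_set hsub
  have hw2I : IntegrableOn (fun t => w t * η t ^ 2) (Ioc a b) := hw2.mono_set hsub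
  have hAI : IntegrableOn A (Ioc a b) := hAint.mono_set hsub
  have hT1I : IntegrableOn T1 (Ioc a b) := hT1int.mono_set hsub
  have hT2I : IntegrableOn T2 (Ioc a b) := hT2int.mono_set hsub
  have hp1I : IntegrableOn (fun t => p t * η' t ^ 2) (Ioc a b) := hint1.mono_set hsub
  -- split hzero
  have hsplit : (∫ t in Ioc a b, A t) = (∫ t in Ioc a b, T2 t) - ∫ t in Ioc a b, T1 t := by
    have e1 : (∫ t in Ioc a b, (A t + (T1 t - T2 t))) =
        (∫ t in Ioc a b, A t) + ∫ t in Ioc a b, (T1 t - T2 t) :=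
      integral_add hAI (hT1I.sub hT2I)
    have e2 : (∫ t in Ioc a b, (T1 t - T2 t)) =
        (∫ t in Ioc a b, T1 t) - ∫ t in Ioc a b, T2 t := integral_sub hT1I hT2I
    rw [e1, e2] at hzero
    linarith
  -- ∫ A in terms of q, w integrals
  have hAval : (∫ t in Ioc a b, A t) =
      (∫ t in Ioc a b, q t * η t ^ 2) - lam * ∫ t in Ioc a b, w t * η t ^ 2 := by
    have e1 : (∫ t in Ioc a b, A t) =
        ∫ t in Ioc a b, (q t * η t ^ 2 - lam * (w t * η t ^ 2)) := by
      refine setIntegral_congr_fun measurableSet_Ioc fun t _ => ?_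
      rw [hA]; ring
    rw [e1, integral_sub hq2I (hw2I.const_mul lam), MeasureTheory.integral_const_mul]
  -- final inequality
  have hfinal : (0:ℝ) ≤ (∫ t in Ioc a b, p t * η' t ^ 2) +
      ((∫ t in Ioc a b, T2 t) - ∫ t in Ioc a b, T1 t) := by
    have e1a : (∫ t in Ioc a b, (p t * η' t ^ 2 + (T2 t - T1 t))) =
        (∫ t in Ioc a b, p t * η' t ^ 2) + ∫ t in Ioc a b, (T2 t - T1 t) :=
      integral_add hp1I (hT2I.sub hT1I)
    have e1b : (∫ t in Ioc a b, (T2 t - T1 t)) =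
        (∫ t in Ioc a b, T2 t) - ∫ t in Ioc a b, T1 t :=
      integral_sub hT2I hT1I
    have e1 : (∫ t in Ioc a b, p t * η' t ^ 2) +
        ((∫ t in Ioc a b, T2 t) - ∫ t in Ioc a b, T1 t) =
        ∫ t in Ioc a b, (p t * η' t ^ 2 + (T2 t - T1 t)) := by
      rw [e1a, e1b]
    have e2 : (∫ t in Ioc a b, (p t * η' t ^ 2 + (T2 t - T1 t))) =
        ∫ t in Ioc a b, R t := by
      refine setIntegral_congr_fun measurableSet_Ioc fun t ht => ?_
      have hyt : 0 < y t := hypos t (hsub ht)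
      have hyne : y t ≠ 0 := ne_of_gt hyt
      rw [hT1, hT2, hR]; simp only
      field_simp
      ring
    rw [e1, e2]
    refine setIntegral_nonneg_ae measurableSet_Ioc ?_
    filter_upwards [hppos] with t hpt ht
    have : 0 < p t := hpt (hsub ht)
    rw [hR]
    positivity
  -- put it together
  rw [ge_iff_le, intervalIntegral.integral_of_le hab.le,
    intervalIntegral.integral_of_le hab.le,
    integral_add hp1I hq2I]
  linarith
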